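/- arXiv:1711.09399 — 3 statements merged into one kernel-verified Lean document; each statement's English description precedes it below -/
import Mathlib

section
/- Let p be a prime, m ≥ 1, and n a positive integer dividing p − 1. Let r ∈ (ℤ/p^mℤ)^× have multiplicative order exactly n, and let G = ℤ/p^mℤ ⋊_r ℤ/nℤ. Then for every integer a, the number of elements g ∈ G with g^a = 1 equals gcd(a, p^m) + p^m·(gcd(a, n) − 1). -/
/-!
Write `g = (x, y)` and `u = r ^ y`. Then `g ^ k = ((1 + u + ⋯ + u ^ (k - 1)) * x, k * y)`.
For `y = 0` the geometric sum is `k`, so there are `gcd (k, p ^ m)` admissible `x`.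
For `y ≠ 0` with `k * y = 0`, the unit `u ≠ 1` has order dividing `n`, which is prime to `p`;
in the local ring `ℤ/p^mℤ` this forces `u - 1` to be a unit rather than nilpotent, and then
`(u - 1) * (1 + ⋯ + u ^ (k - 1)) = u ^ k - 1 = 0` makes the geometric sum vanish, so all `p ^ m`
values of `x` are admissible. There are `gcd (k, n) - 1` such `y`.
-/

open Multiplicative Finset

theorem geom_sum_eq_zero_of_pow_eq_one {R : Type*} [Ring R] {u : R} {k : ℕ}
    (hu : IsUnit (u - 1)) (hk : u ^ k = 1) : ∑ i ∈ range k, u ^ i = 0 :=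
  hu.mul_left_eq_zero.1 (by rw [geom_sum_mul, hk, sub_self])

theorem eq_one_of_pow_eq_one_of_isNilpotent_sub_one {R : Type*} [CommRing R] {u : R} {n : ℕ}
    (hn : IsUnit (n : R)) (hu : u ^ n = 1) (hnil : IsNilpotent (u - 1)) : u = 1 := by
  -- the geometric sum is `n` modulo the nilpotent `u - 1`, hence a unit
  obtain ⟨c, hc⟩ : u - 1 ∣ ∑ i ∈ range n, u ^ i - n := by
    simpa [sum_sub_distrib] using dvd_sum (s := range n) fun i _ => sub_one_dvd_pow_sub_one u i
  have hsum : IsUnit (∑ i ∈ range n, u ^ i) := by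
    rw [← sub_add_cancel (∑ i ∈ range n, u ^ i) n, hc, add_comm]
    exact ((Commute.all _ c).isNilpotent_mul_right hnil).isUnit_add_left_of_commute hn
      (Commute.all _ _)
  rw [← sub_eq_zero]
  exact hsum.mul_right_eq_zero.1 (by rw [geom_sum_mul, hu, sub_self])

theorem ZMod.isUnit_or_isNilpotent_of_prime_pow {p : ℕ} (hp : p.Prime) (m : ℕ)
    (x : ZMod (p ^ m)) : IsUnit x ∨ IsNilpotent x := by
  have : NeZero (p ^ m) := ⟨pow_ne_zero m hp.ne_zero⟩
  rw [← ZMod.natCast_zmod_val x]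
  by_cases h : p ∣ x.val
  · exact Or.inr ⟨m, by rw [← Nat.cast_pow, ZMod.natCast_eq_zero_iff]; exact pow_dvd_pow_of_dvd h m⟩
  · exact Or.inl ((ZMod.isUnit_iff_coprime _ _).2 (((hp.coprime_iff_not_dvd).2 h).symm.pow_right m))

theorem ZMod.geom_sum_eq_zero_of_pow_eq_one {p m n k : ℕ} (hp : p.Prime) (hn : n.Coprime p)
    {u : ZMod (p ^ m)} (hun : u ^ n = 1) (hu : u ≠ 1) (huk : u ^ k = 1) :
    ∑ i ∈ range k, u ^ i = 0 := by
  refine _root_.geom_sum_eq_zero_of_pow_eq_one ?_ huk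
  refine (ZMod.isUnit_or_isNilpotent_of_prime_pow hp m (u - 1)).resolve_right fun hnil => hu ?_
  exact eq_one_of_pow_eq_one_of_isNilpotent_sub_one
    ((ZMod.isUnit_iff_coprime n _).2 (hn.pow_right m)) hun hnil

theorem card_pow_eq_one_multiplicative_zmod (M k : ℕ) [NeZero M] :
    Nat.card {x : Multiplicative (ZMod M) // x ^ k = 1} = M.gcd k :=
  (IsCyclic.card_powMonoidHom_ker _ k).trans (congrArg (Nat.gcd · k) (Nat.card_zmod M))

namespace SemidirectProduct

theorem right_pow {N G : Type*} [Group N] [Group G] {φ : G →* MulAut N} (g : N ⋊[φ] G) (k : ℕ) :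
    (g ^ k).right = g.right ^ k :=
  map_pow rightHom g k

variable {N G : Type*} [CommGroup N] [Group G] {φ : G →* MulAut N}

theorem left_pow (g : N ⋊[φ] G) (k : ℕ) :
    (g ^ k).left = ∏ i ∈ range k, φ (g.right ^ i) g.left := by
  induction k with
  | zero => simp
  | succ k ih =>
    rw [pow_succ', mul_left, ih, map_prod, prod_range_succ', pow_zero, map_one,
      MulAut.one_apply, mul_comm]
    simp only [← MulAut.mul_apply, ← map_mul, pow_succ']

theorem pow_eq_one_iff (g : N ⋊[φ] G) (k : ℕ) :
    g ^ k = 1 ↔ g.right ^ k = 1 ∧ ∏ i ∈ range k, φ (g.right ^ i) g.left = 1 := by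
  rw [SemidirectProduct.ext_iff, left_pow, right_pow, one_left, one_right, and_comm]

theorem card_pow_eq_one [Finite N] [Fintype G] [DecidableEq G] (k : ℕ) :
    Nat.card {g : N ⋊[φ] G // g ^ k = 1} =
      ∑ h ∈ univ.filter (fun h : G => h ^ k = 1),
        Nat.card {n : N // ∏ i ∈ range k, φ (h ^ i) n = 1} := by
  calc Nat.card {g : N ⋊[φ] G // g ^ k = 1}
      = Nat.card (Σ h : {h : G // h ^ k = 1}, {n : N // ∏ i ∈ range k, φ (h.1 ^ i) n = 1}) :=
        Nat.card_congr
          { toFun g := ⟨⟨g.1.right, ((pow_eq_one_iff _ _).1 g.2).1⟩,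
              ⟨g.1.left, ((pow_eq_one_iff _ _).1 g.2).2⟩⟩
            invFun s := ⟨⟨s.2.1, s.1.1⟩, (pow_eq_one_iff _ _).2 ⟨s.1.2, s.2.2⟩⟩
            left_inv _ := rfl
            right_inv _ := rfl }
    _ = _ := by
      rw [Nat.card_sigma, sum_subtype (p := fun h : G => h ^ k = 1) _ (by simp)
        fun h => Nat.card {n : N // ∏ i ∈ range k, φ (h ^ i) n = 1}]

end SemidirectProduct

section CyclicAction

variable {M n : ℕ} {r : ZMod M} {ψ : Multiplicative (ZMod n) →* MulAut (Multiplicative (ZMod M))}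

theorem map_ofAdd_one_pow_apply (hψ : ∀ x : ZMod M, ψ (ofAdd 1) (ofAdd x) = ofAdd (r * x))
    (j : ℕ) (x : ZMod M) : ψ (ofAdd 1 ^ j) (ofAdd x) = ofAdd (r ^ j * x) := by
  induction j with
  | zero => simp
  | succ j ih => rw [pow_succ', map_mul, MulAut.mul_apply, ih, hψ, ← mul_assoc, ← pow_succ']

theorem prod_map_ofAdd_one_pow_apply
    (hψ : ∀ x : ZMod M, ψ (ofAdd 1) (ofAdd x) = ofAdd (r * x)) (j k : ℕ) (x : ZMod M) :
    ∏ i ∈ range k, ψ ((ofAdd 1 ^ j) ^ i) (ofAdd x) = ofAdd ((∑ i ∈ range k, (r ^ j) ^ i) * x) := by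
  simp only [← pow_mul, map_ofAdd_one_pow_apply hψ, ← ofAdd_sum, sum_mul]

end CyclicAction

theorem card_prod_map_pow_eq_one_of_ne_one {p m n k : ℕ} [NeZero n] {r : ZMod (p ^ m)}
    {ψ : Multiplicative (ZMod n) →* MulAut (Multiplicative (ZMod (p ^ m)))}
    (hp : p.Prime) (hn : n.Coprime p) (hr : orderOf r = n)
    (hψ : ∀ x : ZMod (p ^ m), ψ (ofAdd 1) (ofAdd x) = ofAdd (r * x))
    {h : Multiplicative (ZMod n)} (h1 : h ≠ 1) (hk : h ^ k = 1) :
    Nat.card {x : Multiplicative (ZMod (p ^ m)) // ∏ i ∈ range k, ψ (h ^ i) x = 1} = p ^ m := by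
  set j := (toAdd h).val
  have hh : h = ofAdd 1 ^ j := by rw [← ofAdd_nsmul, nsmul_one, ZMod.natCast_zmod_val]; rfl
  have hj : j ≠ 0 := fun hj => h1 ((ZMod.val_eq_zero _).1 hj)
  have hu : r ^ j ≠ 1 := pow_ne_one_of_lt_orderOf hj (hr ▸ ZMod.val_lt _)
  have hun : (r ^ j) ^ n = 1 := by
    rw [← pow_mul, mul_comm, pow_mul, ← hr, pow_orderOf_eq_one, one_pow]
  have hnjk : n ∣ j * k := by
    rw [← ZMod.addOrderOf_one n, ← orderOf_ofAdd_eq_addOrderOf, orderOf_dvd_iff_pow_eq_one,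
      pow_mul, ← hh, hk]
  have huk : (r ^ j) ^ k = 1 := by rwa [← pow_mul, ← orderOf_dvd_iff_pow_eq_one, hr]
  have hsum := ZMod.geom_sum_eq_zero_of_pow_eq_one hp hn hun hu huk
  rw [Nat.card_congr (Equiv.subtypeUnivEquiv fun x => ?_)]
  · exact Nat.card_zmod (p ^ m)
  · rw [hh, ← ofAdd_toAdd x, prod_map_ofAdd_one_pow_apply hψ, hsum, zero_mul, ofAdd_zero]

theorem card_solutions_pow_eq_one_semidirect_zmod_general
    (p m n : ℕ) (hp : p.Prime) (hdvd : n ∣ p - 1)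
    (r : (ZMod (p ^ m))ˣ) (hr : orderOf r = n)
    (ψ : Multiplicative (ZMod n) →* MulAut (Multiplicative (ZMod (p ^ m))))
    (hψ : ∀ x : ZMod (p ^ m),
      ψ (ofAdd (1 : ZMod n)) (ofAdd x) = ofAdd ((r : ZMod (p ^ m)) * x))
    (a : ℤ) :
    Nat.card {g : Multiplicative (ZMod (p ^ m)) ⋊[ψ] Multiplicative (ZMod n) // g ^ a = 1}
      = Int.gcd a (p ^ m) + p ^ m * (Int.gcd a n - 1) := by
  have : NeZero (p ^ m) := ⟨pow_ne_zero m hp.ne_zero⟩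
  have : NeZero n := ⟨hr ▸ (orderOf_pos r).ne'⟩
  have hn : n.Coprime p :=
    ((Nat.coprime_self_sub_right hp.one_le).2 (Nat.coprime_one_right p)).symm.coprime_dvd_left hdvd
  set k := a.natAbs
  set S := univ.filter fun h : Multiplicative (ZMod n) => h ^ k = 1
  have hS : #S = n.gcd k := by
    rw [← Fintype.card_subtype, ← Nat.card_eq_fintype_card, card_pow_eq_one_multiplicative_zmod]
  have hfiber : ∀ h ∈ S, Nat.card {x // ∏ i ∈ range k, ψ (h ^ i) x = 1} =
      if h = 1 then (p ^ m).gcd k else p ^ m := by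
    intro h hh
    split_ifs with h1
    · simp only [h1, one_pow, map_one, MulAut.one_apply, prod_const, card_range]
      exact card_pow_eq_one_multiplicative_zmod _ _
    · exact card_prod_map_pow_eq_one_of_ne_one hp hn (orderOf_units.trans hr) hψ h1
        (mem_filter.1 hh).2
  have h1S : 1 ∈ S := mem_filter.2 ⟨mem_univ _, one_pow k⟩
  calc Nat.card {g : Multiplicative (ZMod (p ^ m)) ⋊[ψ] Multiplicative (ZMod n) // g ^ a = 1}
      = Nat.card {g : Multiplicative (ZMod (p ^ m)) ⋊[ψ] Multiplicative (ZMod n) // g ^ k = 1} := by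
        simp only [k, pow_natAbs_eq_one]
    _ = ∑ h ∈ S, Nat.card {x // ∏ i ∈ range k, ψ (h ^ i) x = 1} :=
        SemidirectProduct.card_pow_eq_one k
    _ = (p ^ m).gcd k + (#S - 1) * p ^ m := by
        rw [sum_congr rfl hfiber, ← add_sum_erase _ _ h1S, if_pos rfl,
          sum_congr rfl fun h hh => if_neg (ne_of_mem_erase hh), sum_const, card_erase_of_mem h1S,
          smul_eq_mul]
    _ = _ := by simp [hS, k, Int.gcd, Int.natAbs_pow, Nat.gcd_comm, mul_comm]

/-- Let `p` be a prime, `m ≥ 1`, `n` a positive divisor of `p - 1`,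
`r ∈ (ℤ/p^mℤ)ˣ` of multiplicative order exactly `n`, and `G = ℤ/p^mℤ ⋊_r ℤ/nℤ`.
Then for every integer `a`, the number of `g ∈ G` with `g^a = 1` equals
`gcd(a, p^m) + p^m · (gcd(a, n) - 1)`. -/
theorem card_solutions_pow_eq_one_semidirect_zmod
    (p m n : ℕ) (hp : p.Prime) (hm : 1 ≤ m) (hn : 0 < n) (hdvd : n ∣ p - 1)
    (r : (ZMod (p ^ m))ˣ) (hr : orderOf r = n)
    (ψ : Multiplicative (ZMod n) →* MulAut (Multiplicative (ZMod (p ^ m))))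
    (hψ : ∀ x : ZMod (p ^ m),
      ψ (ofAdd (1 : ZMod n)) (ofAdd x) = ofAdd ((r : ZMod (p ^ m)) * x))
    (a : ℤ) :
    Nat.card {g : Multiplicative (ZMod (p ^ m)) ⋊[ψ] Multiplicative (ZMod n) // g ^ a = 1}
      = Int.gcd a (p ^ m) + p ^ m * (Int.gcd a n - 1) :=
  card_solutions_pow_eq_one_semidirect_zmod_general p m n hp hdvd r hr ψ hψ a
end

section
/- Let p be a prime, m ≥ 1, and n a positive integer dividing p − 1. Let r ∈ (ℤ/p^mℤ)^× have multiplicative order exactly n, let G = ℤ/p^mℤ ⋊_r ℤ/nℤ, and for an integer t let χ_t : G → ℂ^× be the group homomorphism sending (x, y) to ζ_n^{t·y}. Then for all integers a and b, the sum Σ_{g ∈ G, g^a = 1} χ_t(g^{−b}) equals gcd(a, p^m) − p^m + p^m·gcd(a, n) if gcd(a,n) divides t·b, and equals gcd(a, p^m) − p^m otherwise. -/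
/-!
For `y ≠ 0` the element `s = r ^ y` satisfies `s ^ n = 1`, `s ≠ 1`, so `1 - s` is a unit of
`ℤ/p^mℤ` (a unit of order prime to `p` that is `≡ 1 mod p` is `1`). Hence every `(x, y)` is
conjugate to `(0, y)`, and `(x, y) ^ a = 1 ↔ a • y = 0`. On the fibre `y = 0` the solutions are the
`gcd(a, p^m)` elements of `ℤ/p^mℤ` killed by `a`. As `χ_t` only sees `y`, the sum equals
`gcd(a, p^m) - p^m + p^m · ∑_{a • y = 0} ζ_n^{-tby}`, and the last sum runs over the subgroup of
order `gcd(a, n)` of `ℤ/nℤ`: it is `gcd(a, n)` when the character is trivial there, that is when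
`gcd(a, n) ∣ tb`, and `0` otherwise.
-/

open Multiplicative Finset

namespace SemidirectProduct

variable {N G : Type*} [Group N] [Group G] {φ : G →* MulAut N}

theorem inl_mul_inr_mul_inl_inv (z : N) (g : G) :
    inl z * inr g * (inl z)⁻¹ = (⟨z * φ g z⁻¹, g⟩ : N ⋊[φ] G) := by
  ext <;> simp

theorem mk_pow_eq_one_iff_of_surjective {g : G}
    (hg : Function.Surjective fun z : N => z * φ g z⁻¹) (n : N) (k : ℕ) :
    (⟨n, g⟩ : N ⋊[φ] G) ^ k = 1 ↔ g ^ k = 1 := by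
  obtain ⟨z, rfl⟩ := hg n
  rw [← inl_mul_inr_mul_inl_inv, conj_pow, ← map_pow, mul_inv_eq_one, mul_eq_left,
    map_eq_one_iff _ inr_injective]

theorem mk_one_pow_eq_one_iff (n : N) (k : ℕ) :
    (⟨n, 1⟩ : N ⋊[φ] G) ^ k = 1 ↔ n ^ k = 1 := by
  rw [mk_eq_inl_mul_inr, map_one, mul_one, ← map_pow, map_eq_one_iff _ inl_injective]

instance [Fintype N] [Fintype G] : Fintype (N ⋊[φ] G) := Fintype.ofEquiv _ equivProd.symm

variable [Fintype N] [DecidableEq N] [DecidableEq G] [DecidableEq (N ⋊[φ] G)]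

theorem card_filter_mk_pow_eq_one (hφ : ∀ g ≠ 1, Function.Surjective fun z : N => z * φ g z⁻¹)
    (k : ℕ) (g : G) :
    #{n : N | (⟨n, g⟩ : N ⋊[φ] G) ^ k = 1} =
      if g = 1 then #{n : N | n ^ k = 1} else if g ^ k = 1 then Fintype.card N else 0 := by
  split_ifs with h1 h2
  · subst h1
    simp only [mk_one_pow_eq_one_iff]
  all_goals rw [filter_congr fun n _ => mk_pow_eq_one_iff_of_surjective (hφ g h1) n k]
  · simp [h2]
  · simp [h2]

theorem sum_filter_pow_eq_one_right [Fintype G] {R : Type*} [CommRing R]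
    (hφ : ∀ g ≠ 1, Function.Surjective fun z : N => z * φ g z⁻¹) (k : ℕ) (f : G → R) :
    ∑ x : N ⋊[φ] G with x ^ k = 1, f x.right =
      (#{n : N | n ^ k = 1} - Fintype.card N : R) * f 1 +
        Fintype.card N * ∑ g with g ^ k = 1, f g := by
  have hfiber : ∀ g : G, (#{n : N | (⟨n, g⟩ : N ⋊[φ] G) ^ k = 1} : R) * f g =
      (if g = 1 then (#{n : N | n ^ k = 1} - Fintype.card N : R) * f g else 0) +
        if g ^ k = 1 then Fintype.card N * f g else 0 := by
    intro g
    rw [card_filter_mk_pow_eq_one hφ]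
    by_cases h1 : g = 1
    · subst h1
      simp only [if_true, one_pow]
      ring
    · simp only [h1, if_false, zero_add]
      split_ifs <;> simp
  calc ∑ x : N ⋊[φ] G with x ^ k = 1, f x.right
      = ∑ g, (#{n : N | (⟨n, g⟩ : N ⋊[φ] G) ^ k = 1} : R) * f g := by
        rw [sum_filter, ← equivProd.symm.sum_comp, Fintype.sum_prod_type_right]
        refine sum_congr rfl fun g _ => ?_
        rw [← sum_filter]
        exact (sum_const (f g)).trans (nsmul_eq_mul _ _)
    _ = _ := by
        rw [sum_congr rfl fun g _ => hfiber g, sum_add_distrib, sum_ite_eq', if_pos (mem_univ _),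
          ← sum_filter, mul_sum]

end SemidirectProduct

open scoped Classical in
theorem MonoidHom.sum_filter_pow_eq_one {H R : Type*} [CommGroup H] [Fintype H] [DecidableEq H]
    [CommRing R] [IsDomain R] (f : H →* R) (k : ℕ) :
    ∑ h with h ^ k = 1, f h =
      if ∀ h, h ^ k = 1 → f h = 1 then (#{h : H | h ^ k = 1} : R) else 0 := by
  split_ifs with htriv
  · rw [sum_congr rfl fun h hh => htriv h (mem_filter.1 hh).2, sum_const, nsmul_one]
  · simp only [not_forall] at htriv
    obtain ⟨h, hk, hfh⟩ := htriv
    let K := (powMonoidHom k : H →* H).ker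
    rw [sum_subtype (p := (· ∈ K)) _ (fun h => by simp [K]) f]
    refine sum_hom_units_eq_zero (f.comp K.subtype) fun hK => hfh ?_
    simpa using DFunLike.congr_fun hK ⟨h, hk⟩

theorem IsCyclic.card_filter_pow_eq_one {H : Type*} [CommGroup H] [IsCyclic H] [Fintype H]
    [DecidableEq H] (k : ℕ) : #{h : H | h ^ k = 1} = k.gcd (Fintype.card H) := by
  rw [Nat.gcd_comm, ← Nat.card_eq_fintype_card, ← IsCyclic.card_powMonoidHom_ker,
    Nat.card_eq_fintype_card, Fintype.card_subtype]
  simp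

theorem ZMod.isUnit_iff_castHom_ne_zero {p m : ℕ} (hp : p.Prime) (hm : m ≠ 0)
    (x : ZMod (p ^ m)) : IsUnit x ↔ ZMod.castHom (dvd_pow_self p hm) (ZMod p) x ≠ 0 := by
  have : NeZero (p ^ m) := ⟨pow_ne_zero m hp.ne_zero⟩
  rw [← ZMod.natCast_zmod_val x, ZMod.isUnit_natCast_iff_not_dvd_pow hp (Nat.pos_of_ne_zero hm),
    map_natCast, Ne, ZMod.natCast_eq_zero_iff]

theorem ZMod.isUnit_sub_one_of_pow_eq_one {p m n : ℕ} (hp : p.Prime) (hm : m ≠ 0)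
    (hpn : ¬p ∣ n) {s : ZMod (p ^ m)} (hs : s ^ n = 1) (hs1 : s ≠ 1) : IsUnit (s - 1) := by
  rw [ZMod.isUnit_iff_castHom_ne_zero hp hm, map_sub, map_one, Ne, sub_eq_zero]
  intro hπs
  -- mod `p`, `1 + s + ⋯ + s ^ (n - 1)` reduces to `n`, so it is a unit; it kills `s - 1`
  have hgeom : IsUnit (∑ j ∈ range n, s ^ j) := by
    rw [ZMod.isUnit_iff_castHom_ne_zero hp hm, map_sum]
    simp only [map_pow, hπs, one_pow, sum_const, card_range, nsmul_one]
    rwa [Ne, ZMod.natCast_eq_zero_iff]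
  have := geom_sum_mul s n
  rw [hs, sub_self, hgeom.mul_right_eq_zero, sub_eq_zero] at this
  exact hs1 this

section

variable {n : ℕ} [NeZero n] {R : Type*} [Ring R]
  {ψ : Multiplicative (ZMod n) →* MulAut (Multiplicative R)} {r : R}

theorem map_ofAdd_apply_ofAdd (hψ : ∀ x : R, ψ (ofAdd 1) (ofAdd x) = ofAdd (r * x))
    (y : ZMod n) (x : R) : ψ (ofAdd y) (ofAdd x) = ofAdd (r ^ y.val * x) := by
  have hpow : ∀ k : ℕ, ∀ x : R, (ψ (ofAdd 1) ^ k) (ofAdd x) = ofAdd (r ^ k * x) := by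
    intro k
    induction k with
    | zero => simp
    | succ k ih => intro x; rw [pow_succ, MulAut.mul_apply, hψ, ih, pow_succ, mul_assoc]
  rw [← hpow, ← map_pow, ← ofAdd_nsmul, nsmul_one, ZMod.natCast_zmod_val]

end

theorem surjective_mul_apply_inv_of_isUnit {R : Type*} [Ring R] {σ : MulAut (Multiplicative R)}
    {s : R} (hσ : ∀ x, σ (ofAdd x) = ofAdd (s * x)) (hs : IsUnit (1 - s)) :
    Function.Surjective fun z => z * σ z⁻¹ := by
  obtain ⟨u, hu⟩ := hs
  intro x
  refine ⟨ofAdd (↑u⁻¹ * toAdd x), ?_⟩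
  dsimp only
  rw [← ofAdd_neg, hσ, ← ofAdd_add, ← ofAdd_toAdd x]
  congr 1
  rw [mul_neg, ← sub_eq_add_neg, ← one_sub_mul, ← hu, ← mul_assoc, Units.mul_inv, one_mul,
    toAdd_ofAdd]

theorem Complex.exp_two_pi_I_mul_val_div_eq_one_iff {n : ℕ} [NeZero n] (t : ℤ) (v : ZMod n) :
    Complex.exp (2 * Real.pi * Complex.I * (t * (v.val : ℤ)) / n) = 1 ↔ (t : ZMod n) * v = 0 := by
  have hcast : (t : ZMod n) * v = ((t * (v.val : ℤ) : ℤ) : ZMod n) := by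
    push_cast
    rw [ZMod.natCast_zmod_val]
  rw [hcast, ZMod.intCast_zmod_eq_zero_iff_dvd,
    ← (Complex.isPrimitiveRoot_exp n (NeZero.ne n)).zpow_eq_one_iff_dvd, ← Complex.exp_int_mul]
  push_cast
  ring_nf

theorem ZMod.forall_mul_eq_zero_imp_iff {n : ℕ} (hn : n ≠ 0) (A : ℕ) (c : ℤ) :
    (∀ y : ZMod n, (A : ZMod n) * y = 0 → (c : ZMod n) * y = 0) ↔ (A.gcd n : ℤ) ∣ c := by
  constructor
  · intro h
    obtain ⟨q, hq⟩ := Nat.gcd_dvd_right A n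
    have hq0 : q ≠ 0 := by rintro rfl; exact hn (by simpa using hq)
    have hAq : (A : ZMod n) * q = 0 := by
      obtain ⟨A', hA'⟩ := Nat.gcd_dvd_left A n
      rw [← Nat.cast_mul, ZMod.natCast_eq_zero_iff]
      exact ⟨A', by rw [hq, hA']; nth_rw 1 [hA']; ring⟩
    have hcq := h q hAq
    rw [← Int.cast_natCast, ← Int.cast_mul, ZMod.intCast_zmod_eq_zero_iff_dvd, hq] at hcq
    push_cast at hcq
    exact Int.dvd_of_mul_dvd_mul_right (by exact_mod_cast hq0) hcq
  · rintro ⟨w, rfl⟩ y hy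
    rw [Nat.gcd_eq_gcd_ab]
    push_cast
    rw [ZMod.natCast_self]
    linear_combination (w * A.gcdA n) * hy

theorem surjective_mul_apply_inv_of_orderOf_eq {p m n : ℕ} [NeZero n] (hp : p.Prime) (hm : m ≠ 0)
    (hpn : ¬p ∣ n) {r : (ZMod (p ^ m))ˣ} (hr : orderOf r = n)
    {ψ : Multiplicative (ZMod n) →* MulAut (Multiplicative (ZMod (p ^ m)))}
    (hψ : ∀ x : ZMod (p ^ m), ψ (ofAdd 1) (ofAdd x) = ofAdd ((r : ZMod (p ^ m)) * x))
    {y : Multiplicative (ZMod n)} (hy : y ≠ 1) :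
    Function.Surjective fun z => z * ψ y z⁻¹ := by
  refine surjective_mul_apply_inv_of_isUnit (map_ofAdd_apply_ofAdd hψ (toAdd y)) ?_
  rw [← neg_sub, IsUnit.neg_iff, ← Units.val_pow_eq_pow_val]
  refine ZMod.isUnit_sub_one_of_pow_eq_one hp hm hpn (n := n) ?_ fun h => hy ?_
  · have hrn : r ^ n = 1 := by rw [← hr]; exact pow_orderOf_eq_one r
    rw [← Units.val_pow_eq_pow_val, ← pow_mul, mul_comm, pow_mul, hrn, one_pow, Units.val_one]
  · have hdvd := orderOf_dvd_of_pow_eq_one (Units.val_eq_one.mp h)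
    rw [hr] at hdvd
    rw [← toAdd_eq_zero, ← ZMod.val_eq_zero]
    exact Nat.eq_zero_of_dvd_of_lt hdvd (ZMod.val_lt _)

section

variable {N : Type*} [Group N] {n : ℕ} {ψ : Multiplicative (ZMod n) →* MulAut N}
  {χ : N ⋊[ψ] Multiplicative (ZMod n) →* ℂˣ} {t : ℤ}

theorem map_zpow_eq_map_inr_right
    (hχ : ∀ g : N ⋊[ψ] Multiplicative (ZMod n),
      (χ g : ℂ) = Complex.exp (2 * Real.pi * Complex.I * (t * ((toAdd g.right).val : ℤ)) / n))
    (g : N ⋊[ψ] Multiplicative (ZMod n)) (k : ℤ) :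
    χ (g ^ k) = χ (SemidirectProduct.inr (g.right ^ k)) := by
  rw [Units.ext_iff, hχ, hχ, SemidirectProduct.right_inr, ← SemidirectProduct.rightHom_eq_right,
    map_zpow]

theorem forall_pow_eq_one_imp_map_inr_eq_one_iff [NeZero n]
    (hχ : ∀ g : N ⋊[ψ] Multiplicative (ZMod n),
      (χ g : ℂ) = Complex.exp (2 * Real.pi * Complex.I * (t * ((toAdd g.right).val : ℤ)) / n))
    (A : ℕ) (b : ℤ) :
    (∀ y : Multiplicative (ZMod n), y ^ A = 1 → χ (SemidirectProduct.inr (y ^ (-b))) = 1) ↔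
      (A.gcd n : ℤ) ∣ t * b := by
  rw [← dvd_neg, ← mul_neg, ← ZMod.forall_mul_eq_zero_imp_iff (NeZero.ne n),
    ofAdd.surjective.forall]
  refine forall_congr' fun v => imp_congr (by rw [← ofAdd_nsmul, ofAdd_eq_one, nsmul_eq_mul]) ?_
  rw [← Units.val_eq_one, hχ, SemidirectProduct.right_inr,
    Complex.exp_two_pi_I_mul_val_div_eq_one_iff, toAdd_zpow, toAdd_ofAdd, zsmul_eq_mul]
  push_cast
  ring_nf

end

/-- Let `p` be a prime, `m ≥ 1`, `n` a positive divisor of `p - 1`,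
`r ∈ (ℤ/p^mℤ)ˣ` of multiplicative order exactly `n`, `G = ℤ/p^mℤ ⋊_r ℤ/nℤ`, and for an
integer `t` let `χ_t : G → ℂˣ` be the homomorphism sending `(x, y)` to `ζ_n^{t·y}`.
Then for all integers `a, b`, the sum `Σ_{g ∈ G, g^a = 1} χ_t(g^{-b})` equals
`gcd(a,p^m) - p^m + p^m·gcd(a,n)` if `gcd(a,n) ∣ t·b`, and `gcd(a,p^m) - p^m`
otherwise. -/
theorem character_sum_semidirect_zmod
    (p m n : ℕ) (hp : p.Prime) (hm : 1 ≤ m) (hn : 0 < n) (hdvd : n ∣ p - 1)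
    (r : (ZMod (p ^ m))ˣ) (hr : orderOf r = n)
    (ψ : Multiplicative (ZMod n) →* MulAut (Multiplicative (ZMod (p ^ m))))
    (hψ : ∀ x : ZMod (p ^ m),
      ψ (ofAdd (1 : ZMod n)) (ofAdd x) = ofAdd ((r : ZMod (p ^ m)) * x))
    (t : ℤ)
    (χ : (Multiplicative (ZMod (p ^ m)) ⋊[ψ] Multiplicative (ZMod n)) →* ℂˣ)
    (hχ : ∀ g : Multiplicative (ZMod (p ^ m)) ⋊[ψ] Multiplicative (ZMod n),
      (χ g : ℂ) = Complex.exp (2 * Real.pi * Complex.I * (t * ((toAdd g.right).val : ℤ)) / n))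
    (a b : ℤ) :
    (∑ᶠ g ∈ {g : Multiplicative (ZMod (p ^ m)) ⋊[ψ] Multiplicative (ZMod n) | g ^ a = 1},
        (χ (g ^ (-b)) : ℂ))
      = if (Int.gcd a n : ℤ) ∣ t * b then
          (Int.gcd a (p ^ m) : ℂ) - (p : ℂ) ^ m + (p : ℂ) ^ m * (Int.gcd a n : ℂ)
        else (Int.gcd a (p ^ m) : ℂ) - (p : ℂ) ^ m := by
  classical
  have : NeZero n := ⟨hn.ne'⟩
  have : NeZero (p ^ m) := ⟨pow_ne_zero m hp.ne_zero⟩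
  have hpn : ¬p ∣ n := fun h => Nat.not_dvd_of_pos_of_lt (Nat.sub_pos_of_lt hp.one_lt)
    (Nat.sub_lt hp.pos one_pos) (h.trans hdvd)
  let f : Multiplicative (ZMod n) →* ℂ :=
    (Units.coeHom ℂ).comp ((χ.comp SemidirectProduct.inr).comp (zpowGroupHom (-b)))
  have hχf (g) : (χ (g ^ (-b)) : ℂ) = f g.right := by rw [map_zpow_eq_map_inr_right hχ]; rfl
  have hgcd (k : ℕ) : Int.gcd a k = a.natAbs.gcd k := by rw [Int.gcd, Int.natAbs_natCast]
  have hcond : (∀ y, y ^ a.natAbs = 1 → f y = 1) ↔ (Int.gcd a n : ℤ) ∣ t * b := by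
    simpa only [f, MonoidHom.comp_apply, Units.coeHom_apply, zpowGroupHom_apply, Units.val_eq_one,
      hgcd] using forall_pow_eq_one_imp_map_inr_eq_one_iff hχ a.natAbs b
  simp_rw [← pow_natAbs_eq_one (n := a), ← coe_filter_univ, finsum_mem_coe_finset, hχf]
  rw [SemidirectProduct.sum_filter_pow_eq_one_right
      (fun _ hy => surjective_mul_apply_inv_of_orderOf_eq hp (by omega) hpn hr hψ hy),
    MonoidHom.sum_filter_pow_eq_one, IsCyclic.card_filter_pow_eq_one,
    IsCyclic.card_filter_pow_eq_one, map_one]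
  simp only [hcond, Fintype.card_multiplicative, ZMod.card, ← Nat.cast_pow, hgcd]
  split_ifs <;> push_cast <;> ring
end

section
/- Let p be a prime, h ≥ 1, let F_{p^h} be the field with p^h elements, and let r ∈ F_{p^h}^× have multiplicative order n. Let G = F_{p^h} ⋊_r ℤ/nℤ be the semidirect product of the additive group of F_{p^h} by ℤ/nℤ, where the generator of ℤ/nℤ acts by multiplication by r. Then the number of conjugacy classes of G equals n + (p^h − 1)/n. -/
/-!
Conjugating `(x, y)` by `(a, b)` gives `(r ^ b * x + (1 - r ^ y) * a, y)`. Over `y = 0` the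
conjugacy classes are therefore the orbits of `⟨r⟩` acting on `F` by multiplication: `{0}` and
the `(p ^ h - 1) / n` cosets of `⟨r⟩` in `Fˣ`. For `y ≠ 0` we have `r ^ y ≠ 1`, so
`a ↦ (1 - r ^ y) * a` is onto and the whole fibre over `y` is a single class; this gives
`n - 1` further classes.
-/

open Multiplicative

namespace SemidirectProduct

variable {N H : Type*} [Group N] [CommGroup H] {φ : H →* MulAut N}

theorem conj_right (g m : N ⋊[φ] H) : (g * m * g⁻¹).right = m.right := by
  simp [mul_comm g.right]

theorem conj_left (g m : N ⋊[φ] H) :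
    (g * m * g⁻¹).left = g.left * φ g.right m.left * φ m.right g.left⁻¹ := by
  rw [mul_left, mul_left, mul_right, inv_left, ← MulAut.mul_apply, ← map_mul,
    mul_inv_cancel_comm]

end SemidirectProduct

theorem card_conjClasses_eq_of_isConj_iff {G X : Type*} [Monoid G] (c : G → X)
    (hc : Function.Surjective c) (h : ∀ g g', IsConj g g' ↔ c g = c g') :
    Nat.card (ConjClasses G) = Nat.card X :=
  Nat.card_congr ((Quotient.congrRight h).trans (Setoid.quotientKerEquivOfSurjective c hc))

section ZModPow

variable {G : Type*} [Group G] {g : G} {n : ℕ} [NeZero n]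

theorem pow_zmod_val_eq_one_iff (hg : orderOf g = n) (k : ZMod n) : g ^ k.val = 1 ↔ k = 0 := by
  rw [← orderOf_dvd_iff_pow_eq_one, hg, ← ZMod.natCast_eq_zero_iff, ZMod.natCast_zmod_val]

theorem mem_zpowers_iff_exists_pow_zmod_val (hg : orderOf g = n) {u : G} :
    u ∈ Subgroup.zpowers g ↔ ∃ k : ZMod n, g ^ k.val = u := by
  classical
  have hfin : IsOfFinOrder g := orderOf_pos_iff.mp (hg ▸ NeZero.pos n)
  rw [hfin.mem_zpowers_iff_mem_range_orderOf, Finset.mem_image, hg]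
  constructor
  · rintro ⟨m, hm, rfl⟩
    exact ⟨m, by rw [ZMod.val_natCast_of_lt (Finset.mem_range.1 hm)]⟩
  · rintro ⟨k, rfl⟩
    exact ⟨k.val, Finset.mem_range.2 k.val_lt, rfl⟩

end ZModPow

theorem Nat.card_quotient_zpowers {G : Type*} [Group G] [Finite G] (g : G) :
    Nat.card (G ⧸ Subgroup.zpowers g) = Nat.card G / orderOf g := by
  rw [← Subgroup.index_mul_card (Subgroup.zpowers g), Nat.card_zpowers,
    Nat.mul_div_cancel _ (orderOf_pos g), Subgroup.index]

section FieldSemidirect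

variable {F : Type*} [Field F]

open Classical in
noncomputable def zpowersOrbit (r : Fˣ) (x : F) : Option (Fˣ ⧸ Subgroup.zpowers r) :=
  if hx : x = 0 then none else some (Units.mk0 x hx)

theorem zpowersOrbit_surjective (r : Fˣ) : Function.Surjective (zpowersOrbit r) := by
  rintro (_ | q)
  · exact ⟨0, dif_pos rfl⟩
  · obtain ⟨u, rfl⟩ := QuotientGroup.mk_surjective q
    exact ⟨u, by simp [zpowersOrbit]⟩

theorem zpowersOrbit_eq_iff {r : Fˣ} {x x' : F} :
    zpowersOrbit r x = zpowersOrbit r x' ↔ ∃ u ∈ Subgroup.zpowers r, x' = u * x := by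
  by_cases hx : x = 0 <;> by_cases hx' : x' = 0
  · simpa [zpowersOrbit, hx, hx'] using ⟨1, Subgroup.one_mem _⟩
  · simp [zpowersOrbit, hx, hx']
  · simp [zpowersOrbit, hx, hx']
  · simp only [zpowersOrbit, dif_neg hx, dif_neg hx', Option.some_inj, QuotientGroup.eq]
    constructor
    · intro h
      refine ⟨_, h, ?_⟩
      simp only [Units.val_mul, Units.val_inv_eq_inv_val, Units.val_mk0]
      field_simp
    · rintro ⟨u, hu, rfl⟩
      convert hu
      ext
      simp

variable {n : ℕ}

def GeneratorActsByMul (ψ : Multiplicative (ZMod n) →* MulAut (Multiplicative F)) (r : Fˣ) :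
    Prop :=
  ∀ x : F, ψ (ofAdd 1) (ofAdd x) = ofAdd ((r : F) * x)

variable {ψ : Multiplicative (ZMod n) →* MulAut (Multiplicative F)}

noncomputable def conjInvariant (r : Fˣ) (g : Multiplicative F ⋊[ψ] Multiplicative (ZMod n)) :
    Option (Fˣ ⧸ Subgroup.zpowers r) ⊕ {y : ZMod n // y ≠ 0} :=
  if hy : toAdd g.right = 0 then .inl (zpowersOrbit r (toAdd g.left))
  else .inr ⟨toAdd g.right, hy⟩

theorem conjInvariant_surjective (r : Fˣ) :
    Function.Surjective (conjInvariant (ψ := ψ) r) := by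
  rintro (o | ⟨y, hy⟩)
  · obtain ⟨x, rfl⟩ := zpowersOrbit_surjective r o
    exact ⟨⟨ofAdd x, 1⟩, dif_pos rfl⟩
  · exact ⟨⟨1, ofAdd y⟩, dif_neg hy⟩

variable [NeZero n] {r : Fˣ}

namespace GeneratorActsByMul

theorem apply_ofAdd (hψ : GeneratorActsByMul ψ r) (y : ZMod n) (x : F) :
    ψ (ofAdd y) (ofAdd x) = ofAdd ((r : F) ^ y.val * x) := by
  have hpow (k : ℕ) (x : F) : (ψ (ofAdd 1) ^ k) (ofAdd x) = ofAdd ((r : F) ^ k * x) := by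
    induction k generalizing x with
    | zero => simp
    | succ k ih => rw [pow_succ, MulAut.mul_apply, hψ, ih, pow_succ, mul_assoc]
  rw [← hpow, ← map_pow, ← ofAdd_nsmul, nsmul_one, ZMod.natCast_zmod_val]

theorem conj_ofAdd (hψ : GeneratorActsByMul ψ r) (a x : F) (b y : ZMod n) :
    (⟨ofAdd a, ofAdd b⟩ * ⟨ofAdd x, ofAdd y⟩ * ⟨ofAdd a, ofAdd b⟩⁻¹ :
        Multiplicative F ⋊[ψ] Multiplicative (ZMod n)) =
      ⟨ofAdd (a + (r : F) ^ b.val * x - (r : F) ^ y.val * a), ofAdd y⟩ := by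
  refine SemidirectProduct.ext ?_ (SemidirectProduct.conj_right _ _)
  rw [SemidirectProduct.conj_left]
  simp only [← ofAdd_neg, hψ.apply_ofAdd, ← ofAdd_add]
  ring_nf

theorem isConj_ofAdd_iff (hψ : GeneratorActsByMul ψ r) (x x' : F) (y y' : ZMod n) :
    IsConj (⟨ofAdd x, ofAdd y⟩ : Multiplicative F ⋊[ψ] Multiplicative (ZMod n))
        ⟨ofAdd x', ofAdd y'⟩ ↔
      y' = y ∧ ∃ a : F, ∃ b : ZMod n, x' = a + (r : F) ^ b.val * x - (r : F) ^ y.val * a := by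
  rw [isConj_iff]
  constructor
  · rintro ⟨g, hg⟩
    rw [show g = ⟨ofAdd (toAdd g.left), ofAdd (toAdd g.right)⟩ from rfl, hψ.conj_ofAdd] at hg
    exact ⟨(congrArg (toAdd ∘ SemidirectProduct.right) hg).symm, _, _,
      (congrArg (toAdd ∘ SemidirectProduct.left) hg).symm⟩
  · rintro ⟨rfl, a, b, rfl⟩
    exact ⟨⟨ofAdd a, ofAdd b⟩, hψ.conj_ofAdd a x b _⟩

theorem isConj_ofAdd_zero_iff (hψ : GeneratorActsByMul ψ r)
    (hr : orderOf r = n) (x x' : F) (y' : ZMod n) :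
    IsConj (⟨ofAdd x, ofAdd 0⟩ : Multiplicative F ⋊[ψ] Multiplicative (ZMod n))
        ⟨ofAdd x', ofAdd y'⟩ ↔
      y' = 0 ∧ ∃ u ∈ Subgroup.zpowers r, x' = u * x := by
  rw [hψ.isConj_ofAdd_iff]
  simp [mem_zpowers_iff_exists_pow_zmod_val hr]

theorem isConj_ofAdd_of_ne_zero (hψ : GeneratorActsByMul ψ r)
    (hr : orderOf r = n) (x x' : F) {y : ZMod n} (hy : y ≠ 0) :
    IsConj (⟨ofAdd x, ofAdd y⟩ : Multiplicative F ⋊[ψ] Multiplicative (ZMod n))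
        ⟨ofAdd x', ofAdd y⟩ := by
  have hne : (1 - (r : F) ^ y.val) ≠ 0 := by
    rw [sub_ne_zero, ne_comm, ← Units.val_pow_eq_pow_val, Ne, Units.val_eq_one,
      pow_zmod_val_eq_one_iff hr]
    exact hy
  refine (hψ.isConj_ofAdd_iff _ _ _ _).2 ⟨rfl, (x' - x) / (1 - (r : F) ^ y.val), 0, ?_⟩
  rw [ZMod.val_zero, pow_zero, one_mul]
  field_simp
  ring

theorem isConj_iff_conjInvariant_eq (hψ : GeneratorActsByMul ψ r)
    (hr : orderOf r = n) (g g' : Multiplicative F ⋊[ψ] Multiplicative (ZMod n)) :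
    IsConj g g' ↔ conjInvariant r g = conjInvariant r g' := by
  obtain ⟨x, y, rfl⟩ : ∃ x y, g = ⟨ofAdd x, ofAdd y⟩ := ⟨_, _, rfl⟩
  obtain ⟨x', y', rfl⟩ : ∃ x' y', g' = ⟨ofAdd x', ofAdd y'⟩ := ⟨_, _, rfl⟩
  by_cases hy : y = 0
  · subst hy
    rw [hψ.isConj_ofAdd_zero_iff hr, ← zpowersOrbit_eq_iff]
    by_cases hy' : y' = 0 <;> simp [conjInvariant, hy']
  · have hc : ∀ x, conjInvariant (ψ := ψ) r ⟨ofAdd x, ofAdd y⟩ = .inr ⟨y, hy⟩ :=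
      fun _ ↦ dif_neg hy
    rw [hc]
    constructor
    · intro h
      obtain ⟨rfl, -⟩ := (hψ.isConj_ofAdd_iff _ _ _ _).1 h
      exact (hc x').symm
    · intro h
      obtain rfl : y' = y := by
        by_cases hy' : y' = 0 <;> simp [conjInvariant, hy'] at h
        exact h.symm
      exact hψ.isConj_ofAdd_of_ne_zero hr x x' hy

end GeneratorActsByMul

end FieldSemidirect

theorem conjClasses_card_semidirect_field_general
    (p h : ℕ)
    (F : Type) [Field F] [Fintype F] (hF : Fintype.card F = p ^ h)
    (n : ℕ) (r : Fˣ) (hr : orderOf r = n)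
    (ψ : Multiplicative (ZMod n) →* MulAut (Multiplicative F))
    (hψ : ∀ x : F, ψ (ofAdd (1 : ZMod n)) (ofAdd x) = ofAdd ((r : F) * x)) :
    Nat.card (ConjClasses (Multiplicative F ⋊[ψ] Multiplicative (ZMod n)))
      = n + (p ^ h - 1) / n := by
  have : NeZero n := ⟨hr ▸ (orderOf_pos r).ne'⟩
  have hcard : Nat.card {y : ZMod n // y ≠ 0} = n - 1 := by simp
  rw [card_conjClasses_eq_of_isConj_iff _ (conjInvariant_surjective r)
      (GeneratorActsByMul.isConj_iff_conjInvariant_eq hψ hr), Nat.card_sum, Finite.card_option,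
    Nat.card_quotient_zpowers, Nat.card_units, Nat.card_eq_fintype_card, hF, hr, hcard]
  have := NeZero.pos n
  omega

/-- Let `p` be a prime, `h ≥ 1`, let `F` be the field with `p^h`
elements, and let `r ∈ Fˣ` have multiplicative order `n`.  Let `G = F ⋊_r ℤ/nℤ` be the
semidirect product of the additive group of `F` by `ℤ/nℤ`, where the generator of
`ℤ/nℤ` acts by multiplication by `r`.  Then the number of conjugacy classes of `G`
equals `n + (p^h - 1)/n`. -/
theorem conjClasses_card_semidirect_field
    (p h : ℕ) (hp : p.Prime) (hh : 1 ≤ h)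
    (F : Type) [Field F] [Fintype F] (hF : Fintype.card F = p ^ h)
    (n : ℕ) (r : Fˣ) (hr : orderOf r = n)
    (ψ : Multiplicative (ZMod n) →* MulAut (Multiplicative F))
    (hψ : ∀ x : F, ψ (ofAdd (1 : ZMod n)) (ofAdd x) = ofAdd ((r : F) * x)) :
    Nat.card (ConjClasses (Multiplicative F ⋊[ψ] Multiplicative (ZMod n)))
      = n + (p ^ h - 1) / n :=
  conjClasses_card_semidirect_field_general p h F hF n r hr ψ hψ
end
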